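/- Let R be a ring. Every left regular element of R is weakly left regular: if c ∈ R satisfies rc = 0 ⟹ r = 0 for all r ∈ R, then for every maximal left denominator set S of R, the image c/1 in S⁻¹R is left regular (i.e., q·(c/1) = 0 implies q = 0 in S⁻¹R). -/
import Mathlib


/-- A left Ore set in a ring `R`: a multiplicative subset (`1 ∈ S`, `0 ∉ S`,
closed under multiplication) satisfying the left Ore condition. -/
def IsLeftOreSet (R : Type*) [Ring R] (S : Set R) : Prop :=
  (1 : R) ∈ S ∧ (0 : R) ∉ S ∧ (∀ s ∈ S, ∀ t ∈ S, s * t ∈ S) ∧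
    ∀ (r : R), ∀ s ∈ S, ∃ s' ∈ S, ∃ r' : R, s' * r = r' * s

/-- A left denominator set: a left Ore set such that `r * s = 0` implies
`t * r = 0` for some `t ∈ S`. -/
def IsLeftDenSet (R : Type*) [Ring R] (S : Set R) : Prop :=
  IsLeftOreSet R S ∧ ∀ (r : R), ∀ s ∈ S, r * s = 0 → ∃ t ∈ S, t * r = 0

/-- `ass(S) = {r ∈ R | s r = 0 for some s ∈ S}`. -/
def assSet (R : Type*) [Ring R] (S : Set R) : Set R :=
  {r : R | ∃ s ∈ S, s * r = 0}

/-- A maximal left denominator set of `R`. -/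
def IsMaxLeftDenSet (R : Type*) [Ring R] (S : Set R) : Prop :=
  IsLeftDenSet R S ∧ ∀ T : Set R, IsLeftDenSet R T → S ⊆ T → T = S

/-- The set `L^s_l(R)` of strongly left localizable elements: the intersection of
all maximal left denominator sets of `R`. -/
def stronglyLocalizable (R : Type*) [Ring R] : Set R :=
  {r : R | ∀ S : Set R, IsMaxLeftDenSet R S → r ∈ S}

/-- `T_l(R)`: the union of all left denominator sets contained in `L^s_l(R)`
(the largest strong left denominator set). -/
def Tl (R : Type*) [Ring R] : Set R :=
  ⋃₀ {S : Set R | IsLeftDenSet R S ∧ S ⊆ stronglyLocalizable R}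

/-- The left localization radical `l_R = ⋂_{S ∈ max.Den_l(R)} ass(S)`. -/
def lRad (R : Type*) [Ring R] : Set R :=
  {r : R | ∀ S : Set R, IsMaxLeftDenSet R S → r ∈ assSet R S}

/-- `f : R →+* Q` is a left Ore localization of `R` at `S`: elements of `S` become
units, every element of `Q` is of the form `s⁻¹ r`, and `ker f = ass(S)`. -/
def IsLeftLocalization (R : Type*) [Ring R] {Q : Type*} [Ring Q]
    (S : Set R) (f : R →+* Q) : Prop :=
  (∀ s ∈ S, IsUnit (f s)) ∧
  (∀ q : Q, ∃ s ∈ S, ∃ r : R, ∃ u : Qˣ, (u : Q) = f s ∧ q = (↑u⁻¹ : Q) * f r) ∧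
  (∀ r : R, f r = 0 ↔ r ∈ assSet R S)

theorem stmt12.{u} (R : Type u) [Ring R] (c : R)
    (hc : ∀ r : R, r * c = 0 → r = 0) :
    ∀ S : Set R, IsMaxLeftDenSet R S →
      ∀ (Q : Type u) [Ring Q] (f : R →+* Q), IsLeftLocalization R S f →
        ∀ q : Q, q * f c = 0 → q = 0 := by
  intro S _ Q _ f hf q hq
  obtain ⟨hunits, hform, hker⟩ := hf
  obtain ⟨s, hs, r, u, hu, hq'⟩ := hform q
  have h1 : f r * f c = 0 := by
    have : (u : Q) * (q * f c) = f r * f c := by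
      rw [hq', ← mul_assoc, ← mul_assoc, Units.mul_inv, one_mul]
    rw [hq, mul_zero] at this
    exact this.symm
  rw [← map_mul] at h1
  obtain ⟨t, ht, htrc⟩ := (hker (r * c)).mp h1
  have : (t * r) * c = 0 := by rw [mul_assoc]; exact htrc
  have htr : t * r = 0 := hc _ this
  have hfr : f r = 0 := (hker r).mpr ⟨t, ht, htr⟩
  rw [hq', hfr, mul_zero]
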